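/- arXiv:1301.0722 — 5 statements merged into one kernel-verified Lean document; each statement's English description precedes it below -/
import Mathlib

section
/- Let (Op, w) be a set of weighted operations with each left side of length at most 1, and let b', b'' be natural numbers with b' + b'' = b - 1. If α is an alignment with l(α) = P₁ ∘ P₂ and weight w(α) ≤ b, then there is a splitting α = α₁ ∘ α₂ with l(α₁) = P₁, l(α₂) = P₂, and moreover w(α₁) ≤ b' or w(α₂) ≤ b''. -/
/-- When every piece has length at most one, no piece can straddle the cut point, so the
second alternative of `List.flatten_eq_append_iff` collapses into the first. -/
theorem List.exists_flatten_eq_of_flatten_eq_append {α : Type*} {xss : List (List α)}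
    (hlen : ∀ xs ∈ xss, xs.length ≤ 1) {ys zs : List α} (h : xss.flatten = ys ++ zs) :
    ∃ as bs, xss = as ++ bs ∧ as.flatten = ys ∧ bs.flatten = zs := by
  rcases List.flatten_eq_append_iff.mp h with ⟨as, bs, rfl, rfl, rfl⟩ | ⟨as, bs, c, cs, ds, rfl, rfl, rfl⟩
  · exact ⟨as, bs, rfl, rfl, rfl⟩
  · have hpiece : (bs ++ c :: cs).length ≤ 1 := hlen _ (by simp)
    obtain ⟨rfl, rfl⟩ : bs = [] ∧ cs = [] := by
      simp only [List.length_append, List.length_cons] at hpiece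
      exact ⟨List.length_eq_zero_iff.mp (by omega), List.length_eq_zero_iff.mp (by omega)⟩
    exact ⟨as, [c] :: ds, by simp, by simp, by simp⟩

theorem List.exists_map_flatten_eq_of_map_flatten_eq_append {α β : Type*} {f : β → List α}
    {l : List β} (hlen : ∀ x ∈ l, (f x).length ≤ 1) {ys zs : List α}
    (h : (l.map f).flatten = ys ++ zs) :
    ∃ l₁ l₂, l = l₁ ++ l₂ ∧ (l₁.map f).flatten = ys ∧ (l₂.map f).flatten = zs := by
  obtain ⟨as, bs, hsplit, rfl, rfl⟩ :=
    List.exists_flatten_eq_of_flatten_eq_append (by simpa using hlen) h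
  obtain ⟨l₁, l₂, rfl, rfl, rfl⟩ := List.map_eq_append_iff.mp hsplit
  exact ⟨l₁, l₂, rfl, rfl, rfl⟩

/-- splitting an alignment with a weight bound `b`, where `b' + b'' = b - 1`:
one of the parts has weight `≤ b'` or the other `≤ b''`. -/
theorem alignment_split_weight {α : Type*} (Op : Set (List α × List α))
    (w : List α × List α → ℕ)
    (hOp : ∀ op ∈ Op, op.1.length ≤ 1)
    (b b' b'' : ℕ) (hb : b' + b'' = b - 1)
    (al : List (List α × List α)) (hal : ∀ op ∈ al, op ∈ Op)
    (P₁ P₂ : List α) (h : (al.map Prod.fst).flatten = P₁ ++ P₂)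
    (hw : (al.map w).sum ≤ b) :
    ∃ al₁ al₂ : List (List α × List α), al = al₁ ++ al₂ ∧
      (al₁.map Prod.fst).flatten = P₁ ∧ (al₂.map Prod.fst).flatten = P₂ ∧
      ((al₁.map w).sum ≤ b' ∨ (al₂.map w).sum ≤ b'') := by
  obtain ⟨al₁, al₂, rfl, h₁, h₂⟩ :=
    List.exists_map_flatten_eq_of_map_flatten_eq_append (fun op hop => hOp op (hal op hop)) h
  refine ⟨al₁, al₂, rfl, h₁, h₂, ?_⟩
  have hsum : (al₁.map w).sum + (al₂.map w).sum ≤ b := by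
    simpa only [List.map_append, List.sum_append] using hw
  omega
end

section
/- Let d be the generalized distance induced by a set of weighted operations (Op, w) in which every operation has left side of length at most 1, where identity operations ⟨σ,σ⟩ have weight 0 and all other operations have positive weight. If d(P, W) ≤ b and P = P₁ ∘ P₂, then W can be written as W = W₁ ∘ W₂ with d(P, W) = d(P₁, W₁) + d(P₂, W₂). -/
/-- The generalized distance induced by a set of weighted operations `(Op, w)`:
the minimal weight of an alignment whose left side is `V` and right side is `W`
(`⊤` if there is no such alignment). -/
noncomputable def gdist {α : Type*} (Op : Set (List α × List α))
    (w : List α × List α → ℕ) (V W : List α) : ℕ∞ :=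
  sInf {n : ℕ∞ | ∃ al : List (List α × List α), (∀ op ∈ al, op ∈ Op) ∧
    (al.map Prod.fst).flatten = V ∧ (al.map Prod.snd).flatten = W ∧
    n = ((al.map w).sum : ℕ∞)}

private lemma gdist_le_of_align {α : Type*} (Op : Set (List α × List α))
    (w : List α × List α → ℕ) (al : List (List α × List α))
    (hal : ∀ op ∈ al, op ∈ Op) :
    gdist Op w (al.map Prod.fst).flatten (al.map Prod.snd).flatten
      ≤ ((al.map w).sum : ℕ∞) :=
  sInf_le ⟨al, hal, rfl, rfl, rfl⟩

private lemma gdist_concat_le {α : Type*} (Op : Set (List α × List α))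
    (w : List α × List α → ℕ) (P₁ P₂ W₁ W₂ : List α) :
    gdist Op w (P₁ ++ P₂) (W₁ ++ W₂) ≤ gdist Op w P₁ W₁ + gdist Op w P₂ W₂ := by
  by_cases h₁ : {n : ℕ∞ | ∃ al : List (List α × List α), (∀ op ∈ al, op ∈ Op) ∧
      (al.map Prod.fst).flatten = P₁ ∧ (al.map Prod.snd).flatten = W₁ ∧
      n = ((al.map w).sum : ℕ∞)}.Nonempty
  · by_cases h₂ : {n : ℕ∞ | ∃ al : List (List α × List α), (∀ op ∈ al, op ∈ Op) ∧
        (al.map Prod.fst).flatten = P₂ ∧ (al.map Prod.snd).flatten = W₂ ∧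
        n = ((al.map w).sum : ℕ∞)}.Nonempty
    · obtain ⟨al₁, hmem₁, hl₁, hr₁, hs₁⟩ := csInf_mem h₁
      obtain ⟨al₂, hmem₂, hl₂, hr₂, hs₂⟩ := csInf_mem h₂
      have key : gdist Op w (P₁ ++ P₂) (W₁ ++ W₂)
          ≤ (((al₁ ++ al₂).map w).sum : ℕ∞) := by
        refine sInf_le ⟨al₁ ++ al₂, ?_, ?_, ?_, rfl⟩
        · intro op hop
          rcases List.mem_append.1 hop with h | h
          · exact hmem₁ op h
          · exact hmem₂ op h
        · simp [List.map_append, List.flatten_append, hl₁, hl₂]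
        · simp [List.map_append, List.flatten_append, hr₁, hr₂]
      calc gdist Op w (P₁ ++ P₂) (W₁ ++ W₂)
          ≤ (((al₁ ++ al₂).map w).sum : ℕ∞) := key
        _ = ((al₁.map w).sum : ℕ∞) + ((al₂.map w).sum : ℕ∞) := by
            push_cast [List.map_append, List.sum_append]; ring
        _ = gdist Op w P₁ W₁ + gdist Op w P₂ W₂ := by
            rw [gdist, gdist, ← hs₁, ← hs₂]
    · have : gdist Op w P₂ W₂ = ⊤ := by
        rw [gdist, Set.not_nonempty_iff_eq_empty.1 h₂, sInf_empty]
      simp [this]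
  · have : gdist Op w P₁ W₁ = ⊤ := by
      rw [gdist, Set.not_nonempty_iff_eq_empty.1 h₁, sInf_empty]
    simp [this]

/-- Intermediate value for flattening lists of short lists. -/
private lemma exists_take_flatten_length {α : Type*} :
    ∀ (L : List (List α)), (∀ l ∈ L, l.length ≤ 1) →
      ∀ k ≤ L.flatten.length, ∃ n, ((L.take n).flatten).length = k := by
  intro L
  induction L with
  | nil => intro _ k hk; simp at hk; exact ⟨0, by simp [hk]⟩
  | cons l L ih =>
    intro hlen k hk
    rcases Nat.eq_zero_or_pos k with rfl | hkpos
    · exact ⟨0, by simp⟩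
    · have hl : l.length ≤ 1 := hlen l (by simp)
      have hL : ∀ l' ∈ L, l'.length ≤ 1 := fun l' h => hlen l' (by simp [h])
      interval_cases hll : l.length
      · have hnil : l = [] := List.length_eq_zero_iff.1 hll
        obtain ⟨n, hn⟩ := ih hL k (by simpa [hnil] using hk)
        exact ⟨n + 1, by simpa [hnil] using hn⟩
      · obtain ⟨n, hn⟩ := ih hL (k - 1) (by
          simp only [List.flatten_cons, List.length_append, hll] at hk
          omega)
        exact ⟨n + 1, by simp [hn, hll]; omega⟩

/-- if `d(P, W) ≤ b` and `P = P₁ ++ P₂`, then `W = W₁ ++ W₂` with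
`d(P, W) = d(P₁, W₁) + d(P₂, W₂)`. -/
theorem gdist_split {α : Type*} (Op : Set (List α × List α))
    (w : List α × List α → ℕ)
    (hId : ∀ σ : α, ([σ], [σ]) ∈ Op)
    (hw : ∀ op ∈ Op, (w op = 0 ↔ ∃ σ : α, op = ([σ], [σ])))
    (hOp : ∀ op ∈ Op, op.1.length ≤ 1)
    (b : ℕ) (P₁ P₂ W : List α)
    (h : gdist Op w (P₁ ++ P₂) W ≤ (b : ℕ∞)) :
    ∃ W₁ W₂ : List α, W = W₁ ++ W₂ ∧
      gdist Op w (P₁ ++ P₂) W = gdist Op w P₁ W₁ + gdist Op w P₂ W₂ := by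
  -- the defining set is nonempty
  have hne : {n : ℕ∞ | ∃ al : List (List α × List α), (∀ op ∈ al, op ∈ Op) ∧
      (al.map Prod.fst).flatten = P₁ ++ P₂ ∧ (al.map Prod.snd).flatten = W ∧
      n = ((al.map w).sum : ℕ∞)}.Nonempty := by
    by_contra hc
    rw [gdist, Set.not_nonempty_iff_eq_empty.1 hc, sInf_empty] at h
    exact (ENat.coe_lt_top b).not_ge (le_of_eq (top_le_iff.1 h).symm)
  obtain ⟨al, hmem, hl, hr, hs⟩ := csInf_mem hne
  -- split the alignment
  set L := al.map Prod.fst with hL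
  have hshort : ∀ l ∈ L, l.length ≤ 1 := by
    intro l hlmem
    obtain ⟨op, hop, rfl⟩ := List.mem_map.1 hlmem
    exact hOp op (hmem op hop)
  obtain ⟨n, hn⟩ := exists_take_flatten_length L hshort P₁.length
    (by rw [hl]; simp)
  set al₁ := al.take n with hal₁
  set al₂ := al.drop n with hal₂
  have hsplit : al = al₁ ++ al₂ := (List.take_append_drop n al).symm
  have hmem₁ : ∀ op ∈ al₁, op ∈ Op := fun op hop => hmem op (hsplit ▸ List.mem_append.2 (Or.inl hop))
  have hmem₂ : ∀ op ∈ al₂, op ∈ Op := fun op hop => hmem op (hsplit ▸ List.mem_append.2 (Or.inr hop))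
  have hLtake : (al₁.map Prod.fst) = L.take n := by simp [hal₁, hL, List.map_take]
  have hLdrop : (al₂.map Prod.fst) = L.drop n := by simp [hal₂, hL, List.map_drop]
  have happL : (al₁.map Prod.fst).flatten ++ (al₂.map Prod.fst).flatten = P₁ ++ P₂ := by
    rw [hLtake, hLdrop, ← List.flatten_append, List.take_append_drop, hl]
  have hlen₁ : (al₁.map Prod.fst).flatten.length = P₁.length := by rw [hLtake]; exact hn
  have hleft : (al₁.map Prod.fst).flatten = P₁ ∧ (al₂.map Prod.fst).flatten = P₂ :=
    List.append_inj happL hlen₁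
  have hW : W = (al₁.map Prod.snd).flatten ++ (al₂.map Prod.snd).flatten := by
    rw [← hr]
    conv_lhs => rw [hsplit]
    simp [List.map_append, List.flatten_append]
  refine ⟨(al₁.map Prod.snd).flatten, (al₂.map Prod.snd).flatten, hW, ?_⟩
  · apply le_antisymm
    · rw [hW]; exact gdist_concat_le Op w P₁ P₂ _ _
    · have h₁ : gdist Op w P₁ (al₁.map Prod.snd).flatten ≤ ((al₁.map w).sum : ℕ∞) := by
        rw [← hleft.1]; exact gdist_le_of_align Op w al₁ hmem₁
      have h₂ : gdist Op w P₂ (al₂.map Prod.snd).flatten ≤ ((al₂.map w).sum : ℕ∞) := by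
        rw [← hleft.2]; exact gdist_le_of_align Op w al₂ hmem₂
      calc gdist Op w P₁ (al₁.map Prod.snd).flatten + gdist Op w P₂ (al₂.map Prod.snd).flatten
          ≤ ((al₁.map w).sum : ℕ∞) + ((al₂.map w).sum : ℕ∞) := add_le_add h₁ h₂
        _ = ((al.map w).sum : ℕ∞) := by
            conv_rhs => rw [hsplit]
            push_cast [List.map_append, List.sum_append]; ring
        _ = gdist Op w (P₁ ++ P₂) W := by rw [gdist, ← hs]
end

section
/- Under the hypotheses of the previous statement, if additionally b' + b'' = b - 1, then W can be written as W = W₁ ∘ W₂ with d(P, W) = d(P₁, W₁) + d(P₂, W₂), and d(P₁, W₁) ≤ b' or d(P₂, W₂) ≤ b''. -/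
theorem List.exists_flatten_take_drop_eq_of_length_le_one {β : Type*} {L : List (List β)}
    (hL : ∀ l ∈ L, l.length ≤ 1) {A B : List β} (h : L.flatten = A ++ B) :
    ∃ k, (L.take k).flatten = A ∧ (L.drop k).flatten = B := by
  induction L generalizing A with
  | nil =>
    obtain ⟨rfl, rfl⟩ := List.append_eq_nil_iff.mp h.symm
    exact ⟨0, rfl, rfl⟩
  | cons l L ih =>
    have hL' : ∀ l ∈ L, l.length ≤ 1 := fun l hl => hL l (List.mem_cons_of_mem _ hl)
    cases A with
    | nil => exact ⟨0, rfl, h⟩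
    | cons a A =>
      rcases l with _ | ⟨x, _ | ⟨y, l⟩⟩
      · obtain ⟨k, hk⟩ := ih hL' h
        exact ⟨k + 1, hk⟩
      · simp only [List.flatten_cons, List.cons_append, List.nil_append, List.cons.injEq] at h
        obtain ⟨rfl, h⟩ := h
        obtain ⟨k, hA, hB⟩ := ih hL' h
        exact ⟨k + 1, by simp [hA], hB⟩
      · simp at hL

theorem ENat.le_or_le_of_add_le_of_add_eq_sub_one {x y : ℕ∞} {a b c : ℕ} (h : x + y ≤ c)
    (habc : a + b = c - 1) : x ≤ a ∨ y ≤ b := by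
  lift x to ℕ using ne_top_of_le_ne_top (ENat.natCast_ne_top c) (le_self_add.trans h)
  lift y to ℕ using ne_top_of_le_ne_top (ENat.natCast_ne_top c) (le_add_self.trans h)
  norm_cast at h ⊢
  omega

section Alignment

variable {α : Type*} (Op : Set (List α × List α)) (w : List α × List α → ℕ)

def IsAlignment (al : List (List α × List α)) (V W : List α) : Prop :=
  (∀ op ∈ al, op ∈ Op) ∧ (al.map Prod.fst).flatten = V ∧ (al.map Prod.snd).flatten = W

variable {Op}

theorem IsAlignment.append {al₁ al₂ : List (List α × List α)} {V₁ V₂ W₁ W₂ : List α}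
    (h₁ : IsAlignment Op al₁ V₁ W₁) (h₂ : IsAlignment Op al₂ V₂ W₂) :
    IsAlignment Op (al₁ ++ al₂) (V₁ ++ V₂) (W₁ ++ W₂) := by
  refine ⟨fun op hop => ?_, ?_, ?_⟩
  · rcases List.mem_append.mp hop with hop | hop
    exacts [h₁.1 op hop, h₂.1 op hop]
  · simp only [List.map_append, List.flatten_append, h₁.2.1, h₂.2.1]
  · simp only [List.map_append, List.flatten_append, h₁.2.2, h₂.2.2]

theorem IsAlignment.exists_split_append (hOp : ∀ op ∈ Op, op.1.length ≤ 1)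
    {al : List (List α × List α)} {P₁ P₂ W : List α} (h : IsAlignment Op al (P₁ ++ P₂) W) :
    ∃ al₁ al₂ W₁ W₂, al = al₁ ++ al₂ ∧ W = W₁ ++ W₂ ∧
      IsAlignment Op al₁ P₁ W₁ ∧ IsAlignment Op al₂ P₂ W₂ := by
  obtain ⟨hmem, hV, hW⟩ := h
  obtain ⟨k, h₁, h₂⟩ := List.exists_flatten_take_drop_eq_of_length_le_one
    (by simpa using fun op hop => hOp op (hmem op hop)) hV
  refine ⟨al.take k, al.drop k, _, _, (List.take_append_drop k al).symm, ?_,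
    ⟨fun op hop => hmem op (List.mem_of_mem_take hop), by rw [List.map_take, h₁], rfl⟩,
    ⟨fun op hop => hmem op (List.mem_of_mem_drop hop), by rw [List.map_drop, h₂], rfl⟩⟩
  rw [← hW, ← List.flatten_append, ← List.map_append, List.take_append_drop]

theorem IsAlignment.gdist_le {al : List (List α × List α)} {V W : List α}
    (h : IsAlignment Op al V W) : gdist Op w V W ≤ (al.map w).sum :=
  sInf_le ⟨al, h.1, h.2.1, h.2.2, rfl⟩

theorem exists_isAlignment_gdist_eq {V W : List α} (h : gdist Op w V W ≠ ⊤) :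
    ∃ al, IsAlignment Op al V W ∧ gdist Op w V W = (al.map w).sum := by
  unfold gdist at h ⊢
  obtain ⟨n, hn, -⟩ := not_forall₂.mp (mt sInf_eq_top.mpr h)
  obtain ⟨al, hmem, hV, hW, hcost⟩ := csInf_mem ⟨n, hn⟩
  exact ⟨al, ⟨hmem, hV, hW⟩, hcost⟩

theorem gdist_append_le (V₁ V₂ W₁ W₂ : List α) :
    gdist Op w (V₁ ++ V₂) (W₁ ++ W₂) ≤ gdist Op w V₁ W₁ + gdist Op w V₂ W₂ := by
  rcases eq_or_ne (gdist Op w V₁ W₁) ⊤ with h₁ | h₁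
  · simp [h₁]
  rcases eq_or_ne (gdist Op w V₂ W₂) ⊤ with h₂ | h₂
  · simp [h₂]
  obtain ⟨al₁, hal₁, hd₁⟩ := exists_isAlignment_gdist_eq w h₁
  obtain ⟨al₂, hal₂, hd₂⟩ := exists_isAlignment_gdist_eq w h₂
  calc gdist Op w (V₁ ++ V₂) (W₁ ++ W₂) ≤ ((al₁ ++ al₂).map w).sum := (hal₁.append hal₂).gdist_le w
    _ = gdist Op w V₁ W₁ + gdist Op w V₂ W₂ := by simp [hd₁, hd₂]

theorem exists_gdist_append_eq_add (hOp : ∀ op ∈ Op, op.1.length ≤ 1) {P₁ P₂ W : List α}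
    (h : gdist Op w (P₁ ++ P₂) W ≠ ⊤) :
    ∃ W₁ W₂, W = W₁ ++ W₂ ∧ gdist Op w (P₁ ++ P₂) W = gdist Op w P₁ W₁ + gdist Op w P₂ W₂ := by
  obtain ⟨al, hal, hd⟩ := exists_isAlignment_gdist_eq w h
  obtain ⟨al₁, al₂, W₁, W₂, rfl, rfl, hal₁, hal₂⟩ := hal.exists_split_append hOp
  refine ⟨W₁, W₂, rfl, le_antisymm (gdist_append_le w _ _ _ _) ?_⟩
  calc gdist Op w P₁ W₁ + gdist Op w P₂ W₂ ≤ (al₁.map w).sum + (al₂.map w).sum :=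
        add_le_add (hal₁.gdist_le w) (hal₂.gdist_le w)
    _ = gdist Op w (P₁ ++ P₂) (W₁ ++ W₂) := by simp [hd]

end Alignment

theorem gdist_split_bound_general {α : Type*} (Op : Set (List α × List α))
    (w : List α × List α → ℕ)
    (hOp : ∀ op ∈ Op, op.1.length ≤ 1)
    (b b' b'' : ℕ) (hb : b' + b'' = b - 1)
    (P₁ P₂ W : List α)
    (h : gdist Op w (P₁ ++ P₂) W ≤ (b : ℕ∞)) :
    ∃ W₁ W₂ : List α, W = W₁ ++ W₂ ∧
      gdist Op w (P₁ ++ P₂) W = gdist Op w P₁ W₁ + gdist Op w P₂ W₂ ∧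
      (gdist Op w P₁ W₁ ≤ (b' : ℕ∞) ∨ gdist Op w P₂ W₂ ≤ (b'' : ℕ∞)) := by
  obtain ⟨W₁, W₂, hW, hd⟩ :=
    exists_gdist_append_eq_add w hOp (ne_top_of_le_ne_top (ENat.natCast_ne_top b) h)
  exact ⟨W₁, W₂, hW, hd, ENat.le_or_le_of_add_le_of_add_eq_sub_one (hd ▸ h) hb⟩

/-- additionally, if `b' + b'' = b - 1`, the splitting satisfies
`d(P₁, W₁) ≤ b'` or `d(P₂, W₂) ≤ b''`. -/
theorem gdist_split_bound {α : Type*} (Op : Set (List α × List α))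
    (w : List α × List α → ℕ)
    (hId : ∀ σ : α, ([σ], [σ]) ∈ Op)
    (hw : ∀ op ∈ Op, (w op = 0 ↔ ∃ σ : α, op = ([σ], [σ])))
    (hOp : ∀ op ∈ Op, op.1.length ≤ 1)
    (b b' b'' : ℕ) (hb : b' + b'' = b - 1)
    (P₁ P₂ W : List α)
    (h : gdist Op w (P₁ ++ P₂) W ≤ (b : ℕ∞)) :
    ∃ W₁ W₂ : List α, W = W₁ ++ W₂ ∧
      gdist Op w (P₁ ++ P₂) W = gdist Op w P₁ W₁ + gdist Op w P₂ W₂ ∧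
      (gdist Op w P₁ W₁ ≤ (b' : ℕ∞) ∨ gdist Op w P₂ W₂ ≤ (b'' : ℕ∞)) :=
  gdist_split_bound_general Op w hOp b b' b'' hb P₁ P₂ W h
end

section
/- Let D be a finite set of words and define X ≡ᵣ Y iff startpos_W(X) = startpos_W(Y) for all W ∈ D. Then ≡ᵣ is left-invariant on substrings of D: if X ≡ᵣ Y and both U∘X and U∘Y are substrings of words of D, then U∘X ≡ᵣ U∘Y. -/
/-- `startpos W V`: the set of starting positions (1-based) of occurrences of `V`
in `W`, with `startpos W ε = {0, 1, ..., |W|}`. -/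
def startpos {α : Type*} (W V : List α) : Set ℕ :=
  match V with
  | [] => {i | i ≤ W.length}
  | _ => {i | 1 ≤ i ∧ i + V.length - 1 ≤ W.length ∧ (W.drop (i - 1)).take V.length = V}

lemma mem_startpos_of_ne_nil {α : Type*} {W V : List α} (hV : V ≠ []) (i : ℕ) :
    i ∈ startpos W V ↔
      1 ≤ i ∧ i + V.length - 1 ≤ W.length ∧ (W.drop (i - 1)).take V.length = V := by
  obtain ⟨a, V', rfl⟩ := List.exists_cons_of_ne_nil hV
  rfl

lemma mem_startpos_append {α : Type*} (W U X : List α) (hX : X ≠ []) (i : ℕ) :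
    i ∈ startpos W (U ++ X) ↔
      1 ≤ i ∧ (W.drop (i - 1)).take U.length = U ∧ (i + U.length) ∈ startpos W X := by
  have hUX : U ++ X ≠ [] := by simp [hX]
  rw [mem_startpos_of_ne_nil hUX, mem_startpos_of_ne_nil hX]
  have hXlen : 1 ≤ X.length := List.length_pos_iff.mpr hX
  constructor
  · rintro ⟨hi, hlen, heq⟩
    rw [List.length_append] at hlen
    have hlen' : U.length + X.length ≤ (W.drop (i-1)).length := by
      rw [List.length_drop]; omega
    refine ⟨hi, ?_, hi.trans (Nat.le_add_right _ _), by omega, ?_⟩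
    · have := congrArg (List.take U.length) heq
      rwa [List.take_take, Nat.min_eq_left (by rw [List.length_append]; omega),
        List.take_left] at this
    · have := congrArg (List.drop U.length) heq
      rw [List.drop_take, List.drop_left] at this
      have hdd : W.drop (i + U.length - 1) = (W.drop (i-1)).drop U.length := by
        rw [List.drop_drop]
        congr 1; omega
      rw [hdd]
      rw [List.length_append, show U.length + X.length - U.length = X.length by omega] at this
      exact this
  · rintro ⟨hi, hU, _, hlen, heq⟩
    refine ⟨hi, by rw [List.length_append]; omega, ?_⟩
    have hdd : (W.drop (i-1)).drop U.length = W.drop (i + U.length - 1) := by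
      rw [List.drop_drop]; congr 1; omega
    rw [List.length_append, List.take_add, hU, hdd, heq]

/-- the relation `X ≡ᵣ Y ↔ ∀ W ∈ D, startpos_W(X) = startpos_W(Y)` is
left-invariant on substrings of `D`. -/
theorem startpos_equiv_left_invariant {α : Type*} (D : Finset (List α))
    (X Y U : List α)
    (h : ∀ W ∈ D, startpos W X = startpos W Y)
    (hUX : ∃ W ∈ D, (U ++ X) <:+: W)
    (hUY : ∃ W ∈ D, (U ++ Y) <:+: W) :
    ∀ W ∈ D, startpos W (U ++ X) = startpos W (U ++ Y) := by
  rcases eq_or_ne X [] with rfl | hX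
  · rcases eq_or_ne Y [] with rfl | hY
    · intro W hW; rfl
    · -- X = [], Y ≠ []: contradiction with h
      obtain ⟨W, hW, -⟩ := hUX
      have h0 : (0 : ℕ) ∈ startpos W ([] : List α) := by
        simp [startpos]
      rw [h W hW, mem_startpos_of_ne_nil hY] at h0
      omega
  · rcases eq_or_ne Y [] with rfl | hY
    · obtain ⟨W, hW, -⟩ := hUY
      have h0 : (0 : ℕ) ∈ startpos W ([] : List α) := by
        simp [startpos]
      rw [← h W hW, mem_startpos_of_ne_nil hX] at h0
      omega
    · intro W hW
      ext i
      rw [mem_startpos_append W U X hX, mem_startpos_append W U Y hY, h W hW]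
end

section
/- Generalized splitting: let (Op, w) induce distance d, let ω_max be the maximal length of the left side of an operation in Op, and let α be an alignment with l(α) = P₁' ∘ P₂'. Then α can be written as α = α₁ ∘ β ∘ α₂ where β is either empty or a single operation, l(α₁) is a prefix of P₁' whose complementary suffix in P₁' has length < ω_max, and l(α₂) is a suffix of P₂' whose complementary prefix in P₂' has length < ω_max. -/
/-! Cut `α` at the first operation whose left side reaches past the end of `P₁'`. If that left
side ends exactly at the boundary it belongs to `α₁` and `β` is empty; otherwise it straddles the
boundary, becomes `β`, and sticks out on either side by less than its own length, hence by less
than `ω_max`. -/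

theorem exists_split_of_flatten_map_eq_append {γ β : Type*} (f : γ → List β) {ω : ℕ}
    (hω : 0 < ω) {l : List γ} (hl : ∀ x ∈ l, (f x).length ≤ ω) {P₁ P₂ : List β}
    (h : (l.map f).flatten = P₁ ++ P₂) :
    ∃ l₁ b l₂ : List γ, ∃ u v : List β,
      l = l₁ ++ b ++ l₂ ∧ b.length ≤ 1 ∧
      P₁ = (l₁.map f).flatten ++ u ∧ u.length < ω ∧
      P₂ = v ++ (l₂.map f).flatten ∧ v.length < ω := by
  induction l generalizing P₁ with
  | nil =>
    obtain ⟨rfl, rfl⟩ : P₁ = [] ∧ P₂ = [] := List.append_eq_nil_iff.mp h.symm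
    exact ⟨[], [], [], [], [], by simp, by simp, by simp, hω, by simp, hω⟩
  | cons x rest ih =>
    by_cases hP₁ : P₁ = []
    · subst hP₁
      exact ⟨[], [], x :: rest, [], [], by simp, by simp, by simp, hω, by simpa using h.symm, hω⟩
    have hx : (f x).length ≤ ω := hl x List.mem_cons_self
    rw [List.map_cons, List.flatten_cons, List.append_eq_append_iff] at h
    rcases h with ⟨w, rfl, hrest⟩ | ⟨c, hfx, rfl⟩
    · obtain ⟨l₁, b, l₂, u, v, rfl, hb, rfl, hu, rfl, hv⟩ :=
        ih (fun y hy => hl y (List.mem_cons_of_mem x hy)) hrest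
      exact ⟨x :: l₁, b, l₂, u, v, rfl, hb, by simp, hu, rfl, hv⟩
    · rcases eq_or_ne c [] with rfl | hc
      · exact ⟨[x], [], rest, [], [], rfl, by simp, by simpa using hfx.symm, hω, by simp, hω⟩
      · have hlen := congrArg List.length hfx
        have hP₁pos := List.length_pos_iff.mpr hP₁
        have hcpos := List.length_pos_iff.mpr hc
        rw [List.length_append] at hlen
        exact ⟨[], [x], rest, P₁, c, rfl, by simp, by simp, by omega, by simp, by omega⟩

theorem alignment_split_generalized_general {α : Type*}
    (Op : Finset (List α × List α))
    (hω : 1 ≤ Op.sup (fun op => op.1.length))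
    (al : List (List α × List α)) (hal : ∀ op ∈ al, op ∈ Op)
    (P₁ P₂ : List α) (h : (al.map Prod.fst).flatten = P₁ ++ P₂) :
    ∃ al₁ β al₂ : List (List α × List α),
      al = al₁ ++ β ++ al₂ ∧ β.length ≤ 1 ∧
      (al₁.map Prod.fst).flatten <+: P₁ ∧
      P₁.length - (al₁.map Prod.fst).flatten.length < Op.sup (fun op => op.1.length) ∧
      (al₂.map Prod.fst).flatten <:+ P₂ ∧
      P₂.length - (al₂.map Prod.fst).flatten.length < Op.sup (fun op => op.1.length) := by
  obtain ⟨al₁, β, al₂, u, v, hal_eq, hβ, rfl, hu, rfl, hv⟩ :=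
    exists_split_of_flatten_map_eq_append Prod.fst hω
      (fun op hop => Finset.le_sup (f := fun op => op.1.length) (hal op hop)) h
  refine ⟨al₁, β, al₂, hal_eq, hβ, List.prefix_append _ _, ?_, List.suffix_append _ _, ?_⟩ <;>
    simpa only [List.length_append, Nat.add_sub_cancel_left, Nat.add_sub_cancel]

/-- generalized splitting of an alignment `α` with `l(α) = P₁ ++ P₂`
as `α = α₁ ++ β ++ α₂` where `β` is empty or a single operation, `l(α₁)` is a
prefix of `P₁` whose complementary suffix has length `< ω_max`, and `l(α₂)` is a
suffix of `P₂` whose complementary prefix has length `< ω_max`. -/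
theorem alignment_split_generalized {α : Type*} [DecidableEq α]
    (Op : Finset (List α × List α)) (hne : Op.Nonempty)
    (hω : 1 ≤ Op.sup (fun op => op.1.length))
    (al : List (List α × List α)) (hal : ∀ op ∈ al, op ∈ Op)
    (P₁ P₂ : List α) (h : (al.map Prod.fst).flatten = P₁ ++ P₂) :
    ∃ al₁ β al₂ : List (List α × List α),
      al = al₁ ++ β ++ al₂ ∧ β.length ≤ 1 ∧
      (al₁.map Prod.fst).flatten <+: P₁ ∧
      P₁.length - (al₁.map Prod.fst).flatten.length < Op.sup (fun op => op.1.length) ∧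
      (al₂.map Prod.fst).flatten <:+ P₂ ∧
      P₂.length - (al₂.map Prod.fst).flatten.length < Op.sup (fun op => op.1.length) :=
  alignment_split_generalized_general Op hω al hal P₁ P₂ h
end
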